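/- Let k ≥ 1 and let λ = (λ_1, λ_2, …, λ_{2k}) be a partition with exactly 2k parts, all parts odd and pairwise distinct (so λ_1 > λ_2 > ⋯ > λ_{2k} > 0). Define α = ((λ_1+1)/2, …, (λ_k+1)/2, (λ_{k+1}−1)/2, …, (λ_{2k}−1)/2). Then the Littlewood–Richardson coefficient c^λ_{αα} is at least 1. -/

import Mathlib

/-- A partition: a weakly decreasing finite sequence (list) of positive
integers. -/
def IsPartition (l : List ℕ) : Prop :=
  l.Pairwise (· ≥ ·) ∧ ∀ x ∈ l, 0 < x

/-- The `i`-th part (0-indexed) of a partition, `0` beyond its length. -/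
def part (l : List ℕ) (i : ℕ) : ℕ := l.getD i 0

/-- Cell `(i, j)` (row `i`, column `j`, both 0-indexed) lies in the skew
Young diagram `ν/λ`. -/
def InSkew (nu lam : List ℕ) (i j : ℕ) : Prop :=
  part lam i ≤ j ∧ j < part nu i

/-- Cell `(i, j)` comes weakly before cell `(r, c)` in the reverse reading
order: rows are read top to bottom, and each row is read right to left. -/
def ReadingLE (i j r c : ℕ) : Prop := i < r ∨ (i = r ∧ c ≤ j)

/-- `T` is a Littlewood–Richardson tableau of shape `ν/λ` and content `μ`:
`λ ⊆ ν`, the entries of `T` are positive exactly on the cells of the skew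
diagram `ν/λ`, entries weakly increase from left to right along rows,
entries strictly increase from top to bottom down columns, for every `j ≥ 1`
the entry `j` occurs exactly `μ_j` times, and the reverse reading word is a
lattice word: every prefix contains at least as many occurrences of `j` as
of `j + 1`, for every `j ≥ 1`. -/
structure IsLRTableau (nu lam mu : List ℕ) (T : ℕ → ℕ → ℕ) : Prop where
  subset : ∀ i, part lam i ≤ part nu i
  support : ∀ i j, 0 < T i j ↔ InSkew nu lam i j
  row_weak : ∀ i j j', InSkew nu lam i j → InSkew nu lam i j' → j ≤ j' →
    T i j ≤ T i j'
  col_strict : ∀ i i' j, InSkew nu lam i j → InSkew nu lam i' j → i < i' →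
    T i j < T i' j
  content : ∀ k : ℕ, {p : ℕ × ℕ | T p.1 p.2 = k + 1}.ncard = part mu k
  lattice : ∀ r c k : ℕ,
    {p : ℕ × ℕ | T p.1 p.2 = k + 2 ∧ ReadingLE p.1 p.2 r c}.ncard ≤
    {p : ℕ × ℕ | T p.1 p.2 = k + 1 ∧ ReadingLE p.1 p.2 r c}.ncard

/-- The Littlewood–Richardson coefficient `c^ν_{λμ}`: the number of
Littlewood–Richardson tableaux of shape `ν/λ` and content `μ`. -/
noncomputable def lrCoeff (nu lam mu : List ℕ) : ℕ :=
  {T : ℕ → ℕ → ℕ | IsLRTableau nu lam mu T}.ncard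

/-- The Newell–Littlewood coefficient
`N^ν_{λμ} = Σ_{α,β,γ} c^λ_{αβ} · c^μ_{αγ} · c^ν_{βγ}`, the sum running over
all triples of partitions `(α, β, γ)` (only finitely many terms are
nonzero). -/
noncomputable def nlCoeff (lam mu nu : List ℕ) : ℕ :=
  ∑ᶠ x : {l : List ℕ // IsPartition l} × {l : List ℕ // IsPartition l} ×
      {l : List ℕ // IsPartition l},
    lrCoeff lam x.1.val x.2.1.val * lrCoeff mu x.1.val x.2.2.val *
      lrCoeff nu x.2.1.val x.2.2.val

/-- The partition `α = ((λ₁+1)/2, …, (λ_k+1)/2, (λ_{k+1}−1)/2, …, (λ_{2k}−1)/2)`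
associated to a partition `λ` with `2k` parts. -/
def distAlpha (k : ℕ) (lam : List ℕ) : List ℕ :=
  (List.range (2 * k)).map fun i =>
    if i < k then (part lam i + 1) / 2 else (part lam i - 1) / 2

/-- The partition `β = ((λ₁−1)/2, …, (λ_k−1)/2, (λ_{k+1}+1)/2, …, (λ_{2k}+1)/2)`
associated to a partition `λ` with `2k` parts. -/
def distBeta (k : ℕ) (lam : List ℕ) : List ℕ :=
  (List.range (2 * k)).map fun i =>
    if i < k then (part lam i - 1) / 2 else (part lam i + 1) / 2

/-!
Row `i` of the skew shape `λ/α` has `α_i - 1` cells for `i < k` and `α_i + 1` cells for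
`k ≤ i < 2k`. Fill row `i` with `i + 1`, except that the first cell of a row `i ≥ k` gets
`2k - i`; that cell supplies the entry missing from the short row `2k - 1 - i`, so the content
is `α`. As `α` is strictly decreasing, these first cells have no cell above them, which gives
strict columns. Entries `K + 2` occur only from row `K + 1` on, so a prefix of the reading word
containing one contains all of row `K`, and that row alone holds at least `α_{K+1}` entries
`K + 1`. Finally, there are only finitely many LR tableaux of a given shape and content, so one
tableau gives `c^λ_{αα} ≥ 1`.
-/

lemma part_eq_zero_of_length_le {l : List ℕ} {i : ℕ} (h : l.length ≤ i) : part l i = 0 :=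
  List.getD_eq_default _ _ h

lemma part_le_sum (l : List ℕ) (i : ℕ) : part l i ≤ l.sum := by
  rcases lt_or_ge i l.length with h | h
  · rw [part, List.getD_eq_getElem _ _ h]
    exact List.le_sum_of_mem (List.getElem_mem h)
  · rw [part_eq_zero_of_length_le h]
    exact Nat.zero_le _

lemma part_lt_part_of_pairwise_gt {l : List ℕ} (hl : l.Pairwise (· > ·)) {i j : ℕ}
    (hij : i < j) (hj : j < l.length) : part l j < part l i := by
  rw [part, part, List.getD_eq_getElem _ _ hj, List.getD_eq_getElem _ _ (hij.trans hj)]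
  exact List.pairwise_iff_getElem.mp hl i j _ hj hij

lemma finite_setOf_bounded (R C B : ℕ) :
    {T : ℕ → ℕ → ℕ | ∀ i j, T i j ≤ B ∧ (0 < T i j → i < R ∧ j < C)}.Finite := by
  let restrict (T : ℕ → ℕ → ℕ) (p : Fin R × Fin C) : ℕ := T p.1 p.2
  refine Set.Finite.of_finite_image (f := restrict) ?_ ?_
  · refine (Set.Finite.pi' fun _ => Set.finite_Iic B).subset ?_
    rintro _ ⟨T, hT, rfl⟩ p
    exact (hT _ _).1
  · intro T hT T' hT' h
    funext i j
    by_cases hij : i < R ∧ j < C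
    · exact congrFun h (⟨i, hij.1⟩, ⟨j, hij.2⟩)
    · have hz : ∀ S : ℕ → ℕ → ℕ, (0 < S i j → i < R ∧ j < C) → S i j = 0 :=
        fun S hS => Nat.eq_zero_of_not_pos (mt hS hij)
      rw [hz T (hT i j).2, hz T' (hT' i j).2]

namespace IsLRTableau

variable {nu lam mu : List ℕ} {T : ℕ → ℕ → ℕ}

lemma lt_of_pos (hT : IsLRTableau nu lam mu T) {i j : ℕ} (h : 0 < T i j) :
    i < nu.length ∧ j < nu.sum := by
  have hj := ((hT.support i j).mp h).2
  refine ⟨?_, hj.trans_le (part_le_sum nu i)⟩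
  by_contra hi
  rw [part_eq_zero_of_length_le (not_lt.mp hi)] at hj
  exact Nat.not_lt_zero _ hj

lemma finite_setOf_pos (hT : IsLRTableau nu lam mu T) :
    {p : ℕ × ℕ | 0 < T p.1 p.2}.Finite :=
  ((Set.finite_Iio nu.length).prod (Set.finite_Iio nu.sum)).subset fun _ hp => hT.lt_of_pos hp

lemma le_length (hT : IsLRTableau nu lam mu T) (i j : ℕ) : T i j ≤ mu.length := by
  by_contra! h
  have hfin : {p : ℕ × ℕ | T p.1 p.2 = T i j}.Finite :=
    hT.finite_setOf_pos.subset fun p (hp : T p.1 p.2 = T i j) => by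
      show 0 < T p.1 p.2
      omega
  have hcard := hT.content (T i j - 1)
  rw [Nat.sub_add_cancel (by omega), part_eq_zero_of_length_le (by omega),
    Set.ncard_eq_zero hfin] at hcard
  exact hcard.subset (rfl : T (i, j).1 (i, j).2 = T i j)

end IsLRTableau

lemma setOf_isLRTableau_finite (nu lam mu : List ℕ) :
    {T | IsLRTableau nu lam mu T}.Finite :=
  (finite_setOf_bounded nu.length nu.sum mu.length).subset fun _ hT i j =>
    ⟨hT.le_length i j, hT.lt_of_pos⟩

lemma one_le_lrCoeff_of_isLRTableau {nu lam mu : List ℕ} {T : ℕ → ℕ → ℕ}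
    (hT : IsLRTableau nu lam mu T) : 1 ≤ lrCoeff nu lam mu :=
  (Set.ncard_pos (setOf_isLRTableau_finite nu lam mu)).mpr ⟨T, hT⟩

structure DoubledShape (k : ℕ) (nu al : List ℕ) : Prop where
  length_nu : nu.length ≤ 2 * k
  length_al : al.length ≤ 2 * k
  strictAntiOn : StrictAntiOn (part al) (Set.Iio (2 * k))
  short : ∀ i < k, part nu i + 1 = 2 * part al i
  long : ∀ i, k ≤ i → i < 2 * k → part nu i = 2 * part al i + 1

def doubledTableau (k : ℕ) (nu al : List ℕ) (i j : ℕ) : ℕ :=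
  if part al i ≤ j ∧ j < part nu i then
    if k ≤ i ∧ j = part al i then 2 * k - i else i + 1
  else 0

section

variable {k : ℕ} {nu al : List ℕ}

lemma doubledTableau_eq_succ_iff {i j v : ℕ} :
    doubledTableau k nu al i j = v + 1 ↔ part al i ≤ j ∧ j < part nu i ∧
      if k ≤ i ∧ j = part al i then 2 * k - i = v + 1 else i = v := by
  unfold doubledTableau
  split_ifs <;> simp_all

lemma doubledTableau_of_inSkew {i j : ℕ} (hj : InSkew nu al i j) :
    doubledTableau k nu al i j = if k ≤ i ∧ j = part al i then 2 * k - i else i + 1 :=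
  if_pos hj

lemma le_of_doubledTableau_eq_succ {i j v : ℕ} (hv : doubledTableau k nu al i j = v + 1) :
    v ≤ i := by
  obtain ⟨-, -, hij⟩ := doubledTableau_eq_succ_iff.mp hv
  split_ifs at hij <;> omega

end

namespace DoubledShape

variable {k : ℕ} {nu al : List ℕ}

lemma lt_of_lt_part (h : DoubledShape k nu al) {i j : ℕ} (hj : j < part nu i) : i < 2 * k := by
  by_contra! hi
  rw [part_eq_zero_of_length_le (h.length_nu.trans hi)] at hj
  exact Nat.not_lt_zero _ hj

lemma part_le_part (h : DoubledShape k nu al) (i : ℕ) : part al i ≤ part nu i := by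
  rcases lt_or_ge i k with hi | hi
  · have := h.short i hi
    omega
  rcases lt_or_ge i (2 * k) with hi' | hi'
  · have := h.long i hi hi'
    omega
  · rw [part_eq_zero_of_length_le (h.length_al.trans hi')]
    exact Nat.zero_le _

lemma fiber_of_lt (h : DoubledShape k nu al) {v : ℕ} (hv : v < k) :
    {p : ℕ × ℕ | doubledTableau k nu al p.1 p.2 = v + 1} =
      insert (2 * k - 1 - v, part al (2 * k - 1 - v))
        ({v} ×ˢ Set.Ico (part al v) (part nu v)) := by
  have hlong := h.long (2 * k - 1 - v) (by omega) (by omega)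
  ext ⟨i, j⟩
  simp only [Set.mem_ofPred_eq, doubledTableau_eq_succ_iff, Set.mem_insert_iff, Prod.mk.injEq,
    Set.mem_prod, Set.mem_singleton_iff, Set.mem_Ico]
  constructor
  · rintro ⟨hj₁, hj₂, hij⟩
    have := h.lt_of_lt_part hj₂
    split_ifs at hij with hs
    · obtain rfl : i = 2 * k - 1 - v := by omega
      exact Or.inl ⟨rfl, hs.2⟩
    · exact Or.inr ⟨hij, hij ▸ hj₁, hij ▸ hj₂⟩
  · rintro (⟨rfl, rfl⟩ | ⟨rfl, hj₁, hj₂⟩)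
    · exact ⟨le_rfl, by omega, by rw [if_pos ⟨by omega, rfl⟩]; omega⟩
    · exact ⟨hj₁, hj₂, by rw [if_neg (by omega)]⟩

lemma fiber_of_le (h : DoubledShape k nu al) {v : ℕ} (hv : k ≤ v) :
    {p : ℕ × ℕ | doubledTableau k nu al p.1 p.2 = v + 1} =
      {v} ×ˢ Set.Ico (part al v + 1) (part nu v) := by
  ext ⟨i, j⟩
  simp only [Set.mem_ofPred_eq, doubledTableau_eq_succ_iff, Set.mem_prod, Set.mem_singleton_iff,
    Set.mem_Ico]
  constructor
  · rintro ⟨hj₁, hj₂, hij⟩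
    have := h.lt_of_lt_part hj₂
    split_ifs at hij with hs
    · omega
    · subst hij
      exact ⟨rfl, by omega, hj₂⟩
  · rintro ⟨rfl, hj₁, hj₂⟩
    exact ⟨by omega, hj₂, by rw [if_neg (by omega)]⟩

lemma ncard_fiber (h : DoubledShape k nu al) (v : ℕ) :
    {p : ℕ × ℕ | doubledTableau k nu al p.1 p.2 = v + 1}.ncard = part al v := by
  rcases lt_or_ge v k with hv | hv
  · rw [h.fiber_of_lt hv, Set.ncard_insert_of_notMem
      (fun hp => absurd (Set.mem_singleton_iff.mp hp.1) (by omega)), Set.ncard_prod,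
      Set.ncard_singleton, Set.ncard_Ico_nat, one_mul]
    have := h.short v hv
    omega
  rw [h.fiber_of_le hv, Set.ncard_prod, Set.ncard_singleton, Set.ncard_Ico_nat, one_mul]
  rcases lt_or_ge v (2 * k) with hv' | hv'
  · have := h.long v hv hv'
    omega
  · rw [part_eq_zero_of_length_le (h.length_nu.trans hv'),
      part_eq_zero_of_length_le (h.length_al.trans hv')]

lemma finite_fiber (h : DoubledShape k nu al) (v : ℕ) :
    {p : ℕ × ℕ | doubledTableau k nu al p.1 p.2 = v + 1}.Finite := by
  rcases lt_or_ge v k with hv | hv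
  · rw [h.fiber_of_lt hv]
    exact ((Set.finite_singleton v).prod (Set.finite_Ico _ _)).insert _
  · rw [h.fiber_of_le hv]
    exact (Set.finite_singleton v).prod (Set.finite_Ico _ _)

lemma finite_fiber_and (h : DoubledShape k nu al) (v : ℕ) (P : ℕ × ℕ → Prop) :
    {p : ℕ × ℕ | doubledTableau k nu al p.1 p.2 = v + 1 ∧ P p}.Finite :=
  (h.finite_fiber v).subset fun _ hp => hp.1

lemma part_succ_le_ncard_row (h : DoubledShape k nu al) (K : ℕ) :
    part al (K + 1) ≤ {p : ℕ × ℕ | doubledTableau k nu al p.1 p.2 = K + 1 ∧ p.1 = K}.ncard := by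
  rcases le_or_gt (2 * k) (K + 1) with hK | hK
  · rw [part_eq_zero_of_length_le (h.length_al.trans hK)]
    exact Nat.zero_le _
  have hanti : part al (K + 1) < part al K :=
    h.strictAntiOn (Set.mem_Iio.mpr (by omega)) (Set.mem_Iio.mpr hK) (Nat.lt_succ_self K)
  rcases lt_or_ge K k with hk | hk
  · have hsub : {K} ×ˢ Set.Ico (part al K) (part nu K) ⊆
        {p : ℕ × ℕ | doubledTableau k nu al p.1 p.2 = K + 1 ∧ p.1 = K} := fun p hp =>
      ⟨(h.fiber_of_lt hk).ge (Set.mem_insert_of_mem _ hp), hp.1⟩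
    have hcard := Set.ncard_le_ncard hsub (h.finite_fiber_and K _)
    rw [Set.ncard_prod, Set.ncard_singleton, Set.ncard_Ico_nat, one_mul] at hcard
    have := h.short K hk
    omega
  · have hrow : {p : ℕ × ℕ | doubledTableau k nu al p.1 p.2 = K + 1 ∧ p.1 = K} =
        {p : ℕ × ℕ | doubledTableau k nu al p.1 p.2 = K + 1} :=
      Set.sep_eq_self_iff_mem_true.mpr fun p hp => le_antisymm
        (Set.mem_singleton_iff.mp ((h.fiber_of_le hk).le hp).1).le (le_of_doubledTableau_eq_succ hp)
    rw [hrow, h.ncard_fiber]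
    exact hanti.le

lemma lattice (h : DoubledShape k nu al) (r c K : ℕ) :
    {p : ℕ × ℕ | doubledTableau k nu al p.1 p.2 = K + 2 ∧ ReadingLE p.1 p.2 r c}.ncard ≤
      {p : ℕ × ℕ | doubledTableau k nu al p.1 p.2 = K + 1 ∧ ReadingLE p.1 p.2 r c}.ncard := by
  rcases lt_or_ge K r with hr | hr
  · calc _ ≤ {p : ℕ × ℕ | doubledTableau k nu al p.1 p.2 = K + 1 + 1}.ncard :=
          Set.ncard_le_ncard (fun _ hp => hp.1) (h.finite_fiber _)
      _ = part al (K + 1) := h.ncard_fiber _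
      _ ≤ {p : ℕ × ℕ | doubledTableau k nu al p.1 p.2 = K + 1 ∧ p.1 = K}.ncard :=
          h.part_succ_le_ncard_row K
      _ ≤ _ := Set.ncard_le_ncard (fun p hp => show _ ∧ ReadingLE p.1 p.2 r c from
          ⟨hp.1, Or.inl (hp.2 ▸ hr)⟩) (h.finite_fiber_and _ _)
  · -- every entry `K + 2` lies below row `K`, hence after the prefix
    have hempty : {p : ℕ × ℕ | doubledTableau k nu al p.1 p.2 = K + 2 ∧
        ReadingLE p.1 p.2 r c} = ∅ := by
      refine Set.eq_empty_of_forall_notMem ?_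
      rintro p ⟨hp, hread⟩
      have := le_of_doubledTableau_eq_succ hp
      rcases hread with hread | ⟨hread, -⟩ <;> omega
    rw [hempty, Set.ncard_empty]
    exact Nat.zero_le _

theorem isLRTableau (h : DoubledShape k nu al) :
    IsLRTableau nu al al (doubledTableau k nu al) where
  subset := h.part_le_part
  support i j := by
    unfold doubledTableau InSkew
    split_ifs with hskew
    · have := h.lt_of_lt_part hskew.2
      exact iff_of_true (by omega) hskew
    · exact iff_of_true (Nat.succ_pos i) hskew
    · exact iff_of_false (lt_irrefl 0) hskew
  row_weak i j j' hj hj' hle := by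
    have := h.lt_of_lt_part hj.2
    have := hj.1
    rw [doubledTableau_of_inSkew hj, doubledTableau_of_inSkew hj']
    split_ifs <;> omega
  col_strict i i' j hj hj' hlt := by
    have hi' := h.lt_of_lt_part hj'.2
    have hanti : part al i' < part al i :=
      h.strictAntiOn (Set.mem_Iio.mpr (hlt.trans hi')) (Set.mem_Iio.mpr hi') hlt
    have := hj.1
    have := hj'.1
    rw [doubledTableau_of_inSkew hj, doubledTableau_of_inSkew hj']
    split_ifs <;> omega
  content := h.ncard_fiber
  lattice := h.lattice

end DoubledShape

lemma part_distAlpha (k : ℕ) (lam : List ℕ) {i : ℕ} (hi : i < 2 * k) :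
    part (distAlpha k lam) i = if i < k then (part lam i + 1) / 2 else (part lam i - 1) / 2 := by
  simp only [part, distAlpha, List.getD_eq_getElem?_getD, List.getElem?_map,
    List.getElem?_range hi, Option.map_some, Option.getD_some]

lemma length_distAlpha (k : ℕ) (lam : List ℕ) : (distAlpha k lam).length = 2 * k := by
  rw [distAlpha, List.length_map, List.length_range]

lemma odd_part {l : List ℕ} (hodd : ∀ x ∈ l, Odd x) {i : ℕ} (hi : i < l.length) :
    Odd (part l i) := by
  rw [part, List.getD_eq_getElem _ _ hi]
  exact hodd _ (List.getElem_mem hi)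

theorem doubledShape_distAlpha {k : ℕ} {lam : List ℕ} (hlen : lam.length = 2 * k)
    (hsort : lam.Pairwise (· > ·)) (hodd : ∀ x ∈ lam, Odd x) :
    DoubledShape k lam (distAlpha k lam) where
  length_nu := hlen.le
  length_al := (length_distAlpha k lam).le
  strictAntiOn i hi j hj hij := by
    have hj' : j < 2 * k := hj
    obtain ⟨s, hs⟩ := odd_part hodd (hlen ▸ hj')
    obtain ⟨t, ht⟩ := odd_part hodd (hlen ▸ hij.trans hj')
    have hlt := part_lt_part_of_pairwise_gt hsort hij (hlen ▸ hj')
    rw [part_distAlpha k lam hj', part_distAlpha k lam (hij.trans hj')]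
    split_ifs <;> omega
  short i hi := by
    obtain ⟨t, ht⟩ := odd_part hodd (i := i) (by omega)
    rw [part_distAlpha k lam (by omega), if_pos hi]
    omega
  long i hi hi' := by
    obtain ⟨t, ht⟩ := odd_part hodd (hlen ▸ hi')
    rw [part_distAlpha k lam hi', if_neg (not_lt.mpr hi)]
    omega

theorem one_le_lrCoeff_distAlpha_distAlpha_general
    (k : ℕ) (lam : List ℕ)
    (hlen : lam.length = 2 * k)
    (hsort : lam.Pairwise (· > ·))
    (hodd : ∀ x ∈ lam, Odd x) :
    1 ≤ lrCoeff lam (distAlpha k lam) (distAlpha k lam) :=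
  one_le_lrCoeff_of_isLRTableau (doubledShape_distAlpha hlen hsort hodd).isLRTableau

/-- For a partition `λ` with exactly `2k` parts, all odd and pairwise
distinct, one has `c^λ_{αα} ≥ 1`. -/
theorem one_le_lrCoeff_distAlpha_distAlpha
    (k : ℕ) (hk : 1 ≤ k) (lam : List ℕ)
    (hlen : lam.length = 2 * k)
    (hsort : lam.Pairwise (· > ·))
    (hodd : ∀ x ∈ lam, Odd x) :
    1 ≤ lrCoeff lam (distAlpha k lam) (distAlpha k lam) :=
  one_le_lrCoeff_distAlpha_distAlpha_general k lam hlen hsort hodd
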